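/- arXiv:2405.20933 — 4 statements merged into one kernel-verified Lean document; each statement's English description precedes it below -/
import Mathlib

section
/- Let φ : ℝ → ℝ be convex. Then the OCE risk functional oce(X) = inf_{ξ} (ξ + E[φ(X - ξ)]) is convex: for random variables X, Y and λ ∈ [0,1], oce(λX + (1-λ)Y) ≤ λ·oce(X) + (1-λ)·oce(Y). -/
open MeasureTheory

/-- Convexity of the OCE risk functional. -/
theorem stmt_2 {Ω : Type*} [MeasurableSpace Ω] (μ : Measure Ω) [IsProbabilityMeasure μ]
    (X Y : Ω → ℝ) (hX : Integrable X μ) (hY : Integrable Y μ) (φ : ℝ → ℝ)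
    (hφ_mono : Monotone φ) (hφ_conv : ConvexOn ℝ Set.univ φ)
    (hintX : ∀ ξ : ℝ, Integrable (fun ω => φ (X ω - ξ)) μ)
    (hintY : ∀ ξ : ℝ, Integrable (fun ω => φ (Y ω - ξ)) μ)
    (hintXY : ∀ (l : ℝ) (ξ : ℝ),
      Integrable (fun ω => φ (l * X ω + (1 - l) * Y ω - ξ)) μ)
    (hbddX : BddBelow (Set.range fun ξ : ℝ => ξ + ∫ ω, φ (X ω - ξ) ∂μ))
    (hbddY : BddBelow (Set.range fun ξ : ℝ => ξ + ∫ ω, φ (Y ω - ξ) ∂μ))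
    (lam : ℝ) (hlam : lam ∈ Set.Icc (0 : ℝ) 1) :
    (⨅ ξ : ℝ, (ξ + ∫ ω, φ (lam * X ω + (1 - lam) * Y ω - ξ) ∂μ)) ≤
      lam * (⨅ ξ : ℝ, (ξ + ∫ ω, φ (X ω - ξ) ∂μ)) +
        (1 - lam) * (⨅ ξ : ℝ, (ξ + ∫ ω, φ (Y ω - ξ) ∂μ)) := by
  obtain ⟨hlam0, hlam1⟩ := hlam
  have hlam1' : (0:ℝ) ≤ 1 - lam := by linarith
  set f : ℝ → ℝ := fun ξ => ξ + ∫ ω, φ (X ω - ξ) ∂μ with hf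
  set g : ℝ → ℝ := fun ξ => ξ + ∫ ω, φ (Y ω - ξ) ∂μ with hg
  set k : ℝ → ℝ := fun ξ => ξ + ∫ ω, φ (lam * X ω + (1 - lam) * Y ω - ξ) ∂μ with hk
  -- the combined function is bounded below
  obtain ⟨bX, hbX⟩ := hbddX
  have hbX' : ∀ ξ : ℝ, bX ≤ f ξ := fun ξ => hbX ⟨ξ, rfl⟩
  set C : ℝ := ∫ ω, φ ((2 - lam) * X ω + (1 - (2 - lam)) * Y ω - 0) ∂μ with hC
  have hbddK : BddBelow (Set.range k) := by
    refine ⟨2 * bX - C, ?_⟩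
    rintro _ ⟨ξ, rfl⟩
    -- pointwise midpoint inequality
    have hpt : ∀ ω, 2 * φ (X ω - ξ / 2)
        - φ ((2 - lam) * X ω + (1 - (2 - lam)) * Y ω - 0)
        ≤ φ (lam * X ω + (1 - lam) * Y ω - ξ) := by
      intro ω
      have h := hφ_conv.2 (Set.mem_univ (lam * X ω + (1 - lam) * Y ω - ξ))
        (Set.mem_univ ((2 - lam) * X ω + (1 - (2 - lam)) * Y ω - 0))
        (by norm_num : (0:ℝ) ≤ 1/2) (by norm_num : (0:ℝ) ≤ 1/2) (by norm_num)
      simp only [smul_eq_mul] at h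
      have harg : (1/2 : ℝ) * (lam * X ω + (1 - lam) * Y ω - ξ)
          + (1/2 : ℝ) * ((2 - lam) * X ω + (1 - (2 - lam)) * Y ω - 0)
          = X ω - ξ / 2 := by ring
      rw [harg] at h
      linarith
    have hint1 : Integrable
        (fun ω => 2 * φ (X ω - ξ / 2)
          - φ ((2 - lam) * X ω + (1 - (2 - lam)) * Y ω - 0)) μ :=
      ((hintX (ξ / 2)).const_mul 2).sub (hintXY (2 - lam) 0)
    have hint2 := hintXY lam ξ
    have hmono := integral_mono hint1 hint2 hpt
    rw [integral_sub ((hintX (ξ / 2)).const_mul 2) (hintXY (2 - lam) 0),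
      integral_const_mul _ _] at hmono
    have hfx := hbX' (ξ / 2)
    simp only [hf] at hfx
    simp only [hk]
    have : 2 * (ξ / 2 + ∫ ω, φ (X ω - ξ / 2) ∂μ) - C
        ≤ ξ + ∫ ω, φ (lam * X ω + (1 - lam) * Y ω - ξ) ∂μ := by
      simp only [hC]
      linarith
    linarith
  -- main convexity estimate
  have key : ∀ ξ₁ ξ₂ : ℝ, (⨅ ξ : ℝ, k ξ) ≤ lam * f ξ₁ + (1 - lam) * g ξ₂ := by
    intro ξ₁ ξ₂
    have h1 : (⨅ ξ : ℝ, k ξ) ≤ k (lam * ξ₁ + (1 - lam) * ξ₂) := ciInf_le hbddK _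
    refine h1.trans ?_
    have hpt : ∀ ω, φ (lam * X ω + (1 - lam) * Y ω - (lam * ξ₁ + (1 - lam) * ξ₂))
        ≤ lam * φ (X ω - ξ₁) + (1 - lam) * φ (Y ω - ξ₂) := by
      intro ω
      have h := hφ_conv.2 (Set.mem_univ (X ω - ξ₁)) (Set.mem_univ (Y ω - ξ₂))
        hlam0 hlam1' (by ring)
      have harg : lam • (X ω - ξ₁) + (1 - lam) • (Y ω - ξ₂)
          = lam * X ω + (1 - lam) * Y ω - (lam * ξ₁ + (1 - lam) * ξ₂) := by
        simp only [smul_eq_mul]; ring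
      rw [harg] at h
      simpa using h
    have hint2 : Integrable (fun ω => lam * φ (X ω - ξ₁) + (1 - lam) * φ (Y ω - ξ₂)) μ :=
      ((hintX ξ₁).const_mul lam).add ((hintY ξ₂).const_mul (1 - lam))
    have hmono := integral_mono (hintXY lam (lam * ξ₁ + (1 - lam) * ξ₂)) hint2 hpt
    rw [integral_add ((hintX ξ₁).const_mul lam) ((hintY ξ₂).const_mul (1 - lam)),
      integral_const_mul _ _, integral_const_mul _ _] at hmono
    simp only [hk, hf, hg]
    rw [mul_add, mul_add]
    linarith [hmono]
  -- conclude
  rw [Real.mul_iInf_of_nonneg hlam0, Real.mul_iInf_of_nonneg hlam1']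
  exact le_ciInf_add_ciInf key
end

section
/- Let φ : ℝ → ℝ be differentiable with φ' being μ-strongly monotone (i.e., (φ'(a) - φ'(b))(a - b) ≥ μ(a-b)² for all a,b, with μ > 0). Let x₁,…,xₙ ∈ ℝ and let e*, ê ∈ ℝ satisfy E[φ'(X - e*)] = 1 and (1/n)Σᵢφ'(xᵢ - ê) = 1. Then |e* - ê| ≤ (1/(nμ))·|Σᵢ(φ'(xᵢ - e*) - E[φ'(X - e*)])|. -/
open MeasureTheory

/-- Basic bound on the distance between the population OCE minimizer `e*` and the
empirical minimizer `ê`, under `μ`-strong monotonicity of `φ'`. -/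
theorem stmt_5 {Ω : Type*} [MeasurableSpace Ω] (P : Measure Ω) [IsProbabilityMeasure P]
    (X : Ω → ℝ) (φ φ' : ℝ → ℝ) (hφ : ∀ x, HasDerivAt φ (φ' x) x)
    (μ : ℝ) (hμ : 0 < μ)
    (hmono : ∀ a b : ℝ, (φ' a - φ' b) * (a - b) ≥ μ * (a - b) ^ 2)
    (n : ℕ) (x : Fin n → ℝ) (estar ehat : ℝ)
    (hint : Integrable (fun ω => φ' (X ω - estar)) P)
    (hpop : ∫ ω, φ' (X ω - estar) ∂P = 1)
    (hemp : (1 / (n : ℝ)) * ∑ i, φ' (x i - ehat) = 1) :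
    |estar - ehat| ≤
      (1 / ((n : ℝ) * μ)) * |∑ i, (φ' (x i - estar) - ∫ ω, φ' (X ω - estar) ∂P)| := by
  have hn : (0:ℝ) < n := by
    rcases Nat.eq_zero_or_pos n with h | h
    · exfalso; subst h; simp at hemp
    · exact_mod_cast h
  have hsum : ∑ i, φ' (x i - ehat) = (n : ℝ) := by
    field_simp at hemp
    linarith [hemp]
  set d := ehat - estar with hd
  set S := ∑ i, (φ' (x i - estar) - φ' (x i - ehat)) with hS
  have hSeq : ∑ i, (φ' (x i - estar) - ∫ ω, φ' (X ω - estar) ∂P) = S := by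
    rw [hpop, hS, Finset.sum_sub_distrib, Finset.sum_sub_distrib, hsum]
    simp
  rw [hSeq]
  have hkey : S * d ≥ (n : ℝ) * μ * d ^ 2 := by
    have h1 : ∀ i : Fin n, (φ' (x i - estar) - φ' (x i - ehat)) * d ≥ μ * d ^ 2 := by
      intro i
      have := hmono (x i - estar) (x i - ehat)
      have he : (x i - estar) - (x i - ehat) = d := by ring
      rwa [he] at this
    calc S * d = ∑ i : Fin n, (φ' (x i - estar) - φ' (x i - ehat)) * d := by
          rw [hS, Finset.sum_mul]
      _ ≥ ∑ i : Fin n, μ * d ^ 2 := Finset.sum_le_sum (fun i _ => h1 i)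
      _ = (n : ℝ) * μ * d ^ 2 := by simp [Finset.sum_const]; ring
  have habs : |estar - ehat| = |d| := by rw [hd, abs_sub_comm]
  rw [habs]
  rcases eq_or_ne d 0 with h0 | h0
  · rw [h0]
    simp
    positivity
  · have hdpos : 0 < |d| := abs_pos.mpr h0
    have h2 : (n : ℝ) * μ * d ^ 2 ≤ |S| * |d| := by
      calc (n : ℝ) * μ * d ^ 2 ≤ S * d := hkey
        _ ≤ |S * d| := le_abs_self _
        _ = |S| * |d| := abs_mul _ _
    have hnn : (0:ℝ) < (n : ℝ) * μ := by positivity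
    rw [div_mul_eq_mul_div, one_mul, le_div_iff₀ hnn]
    have hd2 : d ^ 2 = |d| * |d| := by rw [sq, ← abs_mul_abs_self]
    have := h2
    rw [hd2] at this
    nlinarith [hdpos]
end

section
/- Let φ be L-smooth (|φ(y) - φ(x) - φ'(x)(y-x)| ≤ (L/2)(x-y)² for all x,y) and let x₁,…,xₙ, e*, ê ∈ ℝ satisfy (1/n)Σᵢφ'(xᵢ - ê) = 1. Then -(3L/2)(e* - ê)² + (e* - ê) ≤ (1/n)Σᵢ(φ(xᵢ - ê) - φ(xᵢ - e*)) ≤ (3L/2)(e* - ê)² + (e* - ê). -/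
/-- Two-sided bound on the empirical loss differences under `L`-smoothness of `φ`
and the empirical first-order condition. -/
theorem stmt_13 (φ φ' : ℝ → ℝ) (hφ : ∀ x, HasDerivAt φ (φ' x) x)
    (L : ℝ) (hL : 0 < L) (hlip : ∀ a b : ℝ, |φ' a - φ' b| ≤ L * |a - b|)
    (hsmooth : ∀ x y : ℝ, |φ y - (φ x + φ' x * (y - x))| ≤ L / 2 * (x - y) ^ 2)
    (n : ℕ) (x : Fin n → ℝ) (estar ehat : ℝ)
    (hemp : (1 / (n : ℝ)) * ∑ i, φ' (x i - ehat) = 1) :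
    -(3 * L / 2) * (estar - ehat) ^ 2 + (estar - ehat) ≤
        (1 / (n : ℝ)) * ∑ i, (φ (x i - ehat) - φ (x i - estar)) ∧
      (1 / (n : ℝ)) * ∑ i, (φ (x i - ehat) - φ (x i - estar)) ≤
        (3 * L / 2) * (estar - ehat) ^ 2 + (estar - ehat) := by
  have hn : (n : ℝ) ≠ 0 := by
    intro h
    rw [h] at hemp
    simp at hemp
  have hn0 : 0 < (n : ℝ) := by positivity
  set d := estar - ehat with hd
  -- per-term bound
  have hterm : ∀ i : Fin n,
      |φ (x i - ehat) - φ (x i - estar) - φ' (x i - ehat) * d| ≤ L / 2 * d ^ 2 := by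
    intro i
    have h := hsmooth (x i - ehat) (x i - estar)
    have e1 : (x i - estar) - (x i - ehat) = -d := by ring
    have e2 : ((x i - ehat) - (x i - estar)) ^ 2 = d ^ 2 := by ring
    rw [e1, e2] at h
    calc |φ (x i - ehat) - φ (x i - estar) - φ' (x i - ehat) * d|
        = |φ (x i - estar) - (φ (x i - ehat) + φ' (x i - ehat) * (-d))| := by
          rw [abs_sub_comm]; ring_nf
      _ ≤ L / 2 * d ^ 2 := h
  have key : |(1 / (n : ℝ)) * ∑ i, (φ (x i - ehat) - φ (x i - estar)) - d|
      ≤ L / 2 * d ^ 2 := by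
    have heq : (1 / (n : ℝ)) * ∑ i, (φ (x i - ehat) - φ (x i - estar)) - d
        = (1 / (n : ℝ)) * ∑ i, (φ (x i - ehat) - φ (x i - estar) - φ' (x i - ehat) * d) := by
      have hs : (∑ i, φ' (x i - ehat)) = n := by
        field_simp at hemp
        linarith [hemp]
      have expand : ∑ i, (φ (x i - ehat) - φ (x i - estar) - φ' (x i - ehat) * d)
          = (∑ i, (φ (x i - ehat) - φ (x i - estar))) - (∑ i, φ' (x i - ehat)) * d := by
        rw [Finset.sum_mul, ← Finset.sum_sub_distrib]
      rw [expand, hs]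
      field_simp
    rw [heq, abs_mul]
    have h1 : |(1 : ℝ) / n| = 1 / n := abs_of_pos (by positivity)
    rw [h1]
    have h2 : |∑ i, (φ (x i - ehat) - φ (x i - estar) - φ' (x i - ehat) * d)|
        ≤ ∑ _i : Fin n, L / 2 * d ^ 2 := by
      refine (Finset.abs_sum_le_sum_abs _ _).trans ?_
      exact Finset.sum_le_sum fun i _ => hterm i
    rw [Finset.sum_const, Finset.card_univ, Fintype.card_fin, nsmul_eq_mul] at h2
    calc 1 / (n : ℝ) * |∑ i, (φ (x i - ehat) - φ (x i - estar) - φ' (x i - ehat) * d)|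
        ≤ 1 / (n : ℝ) * ((n : ℝ) * (L / 2 * d ^ 2)) := by
          apply mul_le_mul_of_nonneg_left h2 (by positivity)
      _ = L / 2 * d ^ 2 := by field_simp
  have habs := abs_le.mp key
  have hld : L / 2 * d ^ 2 ≤ 3 * L / 2 * d ^ 2 := by nlinarith [sq_nonneg d]
  constructor <;> nlinarith [habs.1, habs.2]
end

section
/- Let φ be L-smooth with empirical minimizer ê of ξ ↦ ξ + (1/n)Σᵢφ(xᵢ - ξ), and let e* be any real number. Define ocê = ê + (1/n)Σᵢφ(xᵢ - ê). Then |ocê - (e* + (1/n)Σᵢφ(xᵢ - e*))| ≤ (3L/2)(e* - ê)². -/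
/-! The empirical objective `F ξ = ξ + (1/n) Σᵢ φ(xᵢ - ξ)` has derivative
`F' ξ = 1 - (1/n) Σᵢ φ'(xᵢ - ξ)`, which is `L`-Lipschitz as an average of `L`-Lipschitz functions
and vanishes at `ê`. Hence `|F'| ≤ L |e* - ê|` between `ê` and `e*`, and the mean value inequality
gives `|F ê - F e*| ≤ L (e* - ê)²`. -/

open Finset

lemma nonneg_of_abs_sub_le_mul_abs {g : ℝ → ℝ} {L : ℝ} (hg : ∀ a b, |g a - g b| ≤ L * |a - b|) :
    0 ≤ L := by
  simpa using (abs_nonneg _).trans (hg 1 0)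

lemma abs_sub_le_mul_sq_of_deriv_eq_zero {f f' : ℝ → ℝ} {L a b : ℝ}
    (hf : ∀ x, HasDerivAt f (f' x) x) (hf' : ∀ x y, |f' x - f' y| ≤ L * |x - y|)
    (ha : f' a = 0) : |f b - f a| ≤ L * (b - a) ^ 2 := by
  have hL := nonneg_of_abs_sub_le_mul_abs hf'
  have hbound : ∀ ξ ∈ Set.uIcc a b, ‖f' ξ‖ ≤ L * |b - a| := fun ξ hξ =>
    calc ‖f' ξ‖ = |f' ξ - f' a| := by rw [ha, sub_zero, Real.norm_eq_abs]
      _ ≤ L * |ξ - a| := hf' ξ a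
      _ ≤ L * |b - a| := mul_le_mul_of_nonneg_left (Set.abs_sub_left_of_mem_uIcc hξ) hL
  have hmvt := (convex_uIcc a b).norm_image_sub_le_of_norm_hasDerivWithin_le
    (fun ξ _ => (hf ξ).hasDerivWithinAt) hbound Set.left_mem_uIcc Set.right_mem_uIcc
  rw [Real.norm_eq_abs, Real.norm_eq_abs] at hmvt
  calc |f b - f a| ≤ L * |b - a| * |b - a| := hmvt
    _ = L * (b - a) ^ 2 := by rw [mul_assoc, ← sq, sq_abs]

lemma abs_average_sub_average_le {n : ℕ} {g : Fin n → ℝ → ℝ} {L : ℝ} (hL : 0 ≤ L)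
    (hg : ∀ i a b, |g i a - g i b| ≤ L * |a - b|) (a b : ℝ) :
    |(1 / (n : ℝ)) * ∑ i, g i a - (1 / (n : ℝ)) * ∑ i, g i b| ≤ L * |a - b| := by
  have hsum : |∑ i, (g i a - g i b)| ≤ n * (L * |a - b|) :=
    calc |∑ i, (g i a - g i b)| ≤ ∑ i, |g i a - g i b| := abs_sum_le_sum_abs _ _
      _ ≤ ∑ _i : Fin n, L * |a - b| := sum_le_sum fun i _ => hg i a b
      _ = n * (L * |a - b|) := by simp
  have hn : (1 / (n : ℝ)) * n ≤ 1 := by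
    rcases Nat.eq_zero_or_pos n with rfl | hn
    · simp
    · rw [one_div_mul_cancel (by positivity)]
  calc |(1 / (n : ℝ)) * ∑ i, g i a - (1 / (n : ℝ)) * ∑ i, g i b|
      = (1 / (n : ℝ)) * |∑ i, (g i a - g i b)| := by
        rw [← mul_sub, ← sum_sub_distrib, abs_mul, abs_of_nonneg (by positivity)]
    _ ≤ (1 / (n : ℝ)) * (n * (L * |a - b|)) := by gcongr
    _ ≤ L * |a - b| := by rw [← mul_assoc]; exact mul_le_of_le_one_left (by positivity) hn

lemma hasDerivAt_empiricalObjective {φ φ' : ℝ → ℝ} (hφ : ∀ x, HasDerivAt φ (φ' x) x)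
    {n : ℕ} (x : Fin n → ℝ) (ξ : ℝ) :
    HasDerivAt (fun ξ => ξ + (1 / (n : ℝ)) * ∑ i, φ (x i - ξ))
      (1 - (1 / (n : ℝ)) * ∑ i, φ' (x i - ξ)) ξ := by
  have hsum : HasDerivAt (fun ξ => ∑ i, φ (x i - ξ)) (∑ i, -φ' (x i - ξ)) ξ :=
    HasDerivAt.fun_sum fun i _ => by
      simpa [Function.comp_def] using (hφ (x i - ξ)).comp ξ ((hasDerivAt_id ξ).const_sub (x i))
  refine ((hasDerivAt_id ξ).add (hsum.const_mul (1 / (n : ℝ)))).congr_deriv ?_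
  rw [sum_neg_distrib]
  ring

theorem stmt_14_general (φ φ' : ℝ → ℝ) (hφ : ∀ x, HasDerivAt φ (φ' x) x)
    (L : ℝ) (hlip : ∀ a b : ℝ, |φ' a - φ' b| ≤ L * |a - b|)
    (n : ℕ) (x : Fin n → ℝ) (estar ehat : ℝ)
    (hemp : (1 / (n : ℝ)) * ∑ i, φ' (x i - ehat) = 1) :
    |(ehat + (1 / (n : ℝ)) * ∑ i, φ (x i - ehat)) -
        (estar + (1 / (n : ℝ)) * ∑ i, φ (x i - estar))| ≤
      (3 * L / 2) * (estar - ehat) ^ 2 := by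
  have hL := nonneg_of_abs_sub_le_mul_abs hlip
  have hderiv_lip : ∀ a b : ℝ, |(1 - (1 / (n : ℝ)) * ∑ i, φ' (x i - a)) -
      (1 - (1 / (n : ℝ)) * ∑ i, φ' (x i - b))| ≤ L * |a - b| := fun a b => by
    rw [sub_sub_sub_cancel_left, abs_sub_comm]
    exact abs_average_sub_average_le hL
      (fun i a b => (hlip _ _).trans_eq (by rw [sub_sub_sub_cancel_left, abs_sub_comm])) a b
  have hkey := abs_sub_le_mul_sq_of_deriv_eq_zero (hasDerivAt_empiricalObjective hφ x) hderiv_lip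
    (a := ehat) (b := estar) (by rw [hemp, sub_self])
  rw [abs_sub_comm]
  exact hkey.trans (by gcongr; linarith)

/-- The empirical OCE value evaluated at the empirical minimizer `ê` is within
`(3L/2)(e* - ê)²` of the value evaluated at any point `e*`. -/
theorem stmt_14 (φ φ' : ℝ → ℝ) (hφ : ∀ x, HasDerivAt φ (φ' x) x)
    (L : ℝ) (hL : 0 < L) (hlip : ∀ a b : ℝ, |φ' a - φ' b| ≤ L * |a - b|)
    (n : ℕ) (x : Fin n → ℝ) (estar ehat : ℝ)
    (hemp : (1 / (n : ℝ)) * ∑ i, φ' (x i - ehat) = 1) :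
    |(ehat + (1 / (n : ℝ)) * ∑ i, φ (x i - ehat)) -
        (estar + (1 / (n : ℝ)) * ∑ i, φ (x i - estar))| ≤
      (3 * L / 2) * (estar - ehat) ^ 2 :=
  stmt_14_general φ φ' hφ L hlip n x estar ehat hemp
end
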